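/- Regard ℝ[[x₁,…,xₙ]] and ℝ[[y₁,…,yₘ]] as subrings of ℝ[[x₁,…,xₙ,y₁,…,yₘ]] in the canonical way. Let I be an ideal of ℝ[[x₁,…,xₙ]] and J an ideal of ℝ[[y₁,…,yₘ]], and write A = ℝ[[x₁,…,xₙ]]/I and B = ℝ[[y₁,…,yₘ]]/J. Let k ≥ 1, and let f₀ ∈ ℝ[[x₁,…,xₙ]] and g₀ ∈ ℝ[[y₁,…,yₘ]] be such that the class a₀ of f₀ in A satisfies a₀^k = 0 and a₀^{k−1} ≠ 0, and the class b₀ of g₀ in B satisfies b₀^k = 0 and b₀^{k−1} ≠ 0. Let K be the ideal of ℝ[[x₁,…,xₙ,y₁,…,yₘ]] generated by I ∪ J ∪ {f₀ − g₀}. Then the canonical ring homomorphism A → ℝ[[x₁,…,xₙ,y₁,…,yₘ]]/K (induced by the inclusion ℝ[[x₁,…,xₙ]] ⊆ ℝ[[x₁,…,xₙ,y₁,…,yₘ]]) is injective. -/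

import Mathlib

/-!
Pick a linear functional `μ` on `B` with `μ (b₀ ^ (k - 1)) = 1`. In the algebraic pushout
`A ⊗ B`, the map `B → ℝ[t]/(t^k)`, `w ↦ ∑ⱼ μ (w b₀ ^ j) t^(k-1-j)`, is `ℝ[t]`-linear (with `t`
acting by `b₀`) and sends `1` to a unit, so `A ⊗ B → A ⊗ ℝ[t]/(t^k) → A` retracts `A → A ⊗ B` up
to that unit. For power series the same formula makes sense coefficientwise in the `x`-variables:
writing `s ∈ ℝ[[x, y]]` as a series in `x` with coefficients in `ℝ[[y]]` and applying the
functionals to the coefficients gives an additive map `T : ℝ[[x, y]] → A` with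
`T (s f) = T s · [f]` for `f ∈ ℝ[[x]]`, vanishing on every multiple of a generator of `K`.
Hence `T` kills `K`, while on `ℝ[[x]]` it is multiplication by the unit `T 1`.
-/

open Classical

/-- The canonical inclusion `ℝ[[x₁,…,xₙ]] ⊆ ℝ[[x₁,…,xₙ,y₁,…,yₘ]]` (on coefficients). -/
noncomputable def inclX {n m : ℕ} (f : MvPowerSeries (Fin n) ℝ) :
    MvPowerSeries (Fin n ⊕ Fin m) ℝ :=
  fun d =>
    if h : ∃ e : Fin n →₀ ℕ,
        Finsupp.embDomain ⟨Sum.inl, Sum.inl_injective⟩ e = d then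
      MvPowerSeries.coeff (R := ℝ) h.choose f
    else 0

/-- The canonical inclusion `ℝ[[y₁,…,yₘ]] ⊆ ℝ[[x₁,…,xₙ,y₁,…,yₘ]]` (on coefficients). -/
noncomputable def inclY {n m : ℕ} (g : MvPowerSeries (Fin m) ℝ) :
    MvPowerSeries (Fin n ⊕ Fin m) ℝ :=
  fun d =>
    if h : ∃ e : Fin m →₀ ℕ,
        Finsupp.embDomain ⟨Sum.inr, Sum.inr_injective⟩ e = d then
      MvPowerSeries.coeff (R := ℝ) h.choose g
    else 0

/-- The ideal `K` of `ℝ[[x₁,…,xₙ,y₁,…,yₘ]]` generated by `I ∪ J ∪ {f₀ − g₀}`. -/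
noncomputable def pushoutIdeal {n m : ℕ} (I : Ideal (MvPowerSeries (Fin n) ℝ))
    (J : Ideal (MvPowerSeries (Fin m) ℝ)) (f₀ : MvPowerSeries (Fin n) ℝ)
    (g₀ : MvPowerSeries (Fin m) ℝ) : Ideal (MvPowerSeries (Fin n ⊕ Fin m) ℝ) :=
  Ideal.span (inclX '' (I : Set (MvPowerSeries (Fin n) ℝ)) ∪
    (inclY '' (J : Set (MvPowerSeries (Fin m) ℝ)) ∪ {inclX f₀ - inclY g₀}))

open Filter Finset

namespace MvPowerSeries

variable {σ τ R : Type*}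

instance : TendstoCofinite (Sum.inl : σ → σ ⊕ τ) := tendstoCofinite_of_injective Sum.inl_injective

instance : TendstoCofinite (Sum.inr : τ → σ ⊕ τ) := tendstoCofinite_of_injective Sum.inr_injective

section CommSemiring

variable [CommSemiring R]

theorem coeff_rename_embedding (e : σ ↪ τ) (f : MvPowerSeries σ R) (d : τ →₀ ℕ) :
    coeff d (rename e f) =
      if h : ∃ x, Finsupp.embDomain e x = d then coeff h.choose f else 0 := by
  split_ifs with h
  · calc coeff d (rename e f) = coeff (Finsupp.embDomain e h.choose) (rename e f) := by
          rw [h.choose_spec]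
      _ = coeff h.choose f := coeff_embDomain_rename e f _
  · refine coeff_rename_eq_zero _ _ fun ⟨x, hx⟩ ↦ h ⟨x, ?_⟩
    rwa [Finsupp.embDomain_eq_mapDomain]

private noncomputable def sumToIterFun (s : MvPowerSeries (σ ⊕ τ) R) :
    MvPowerSeries σ (MvPowerSeries τ R) :=
  fun d e => coeff (Finsupp.sumFinsuppAddEquivProdFinsupp.symm (d, e)) s

private theorem coeff_coeff_sumToIterFun (s : MvPowerSeries (σ ⊕ τ) R) (d : σ →₀ ℕ)
    (e : τ →₀ ℕ) :
    coeff e (coeff d (sumToIterFun s)) =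
      coeff (Finsupp.sumFinsuppAddEquivProdFinsupp.symm (d, e)) s :=
  rfl

noncomputable def sumToIter :
    MvPowerSeries (σ ⊕ τ) R →+* MvPowerSeries σ (MvPowerSeries τ R) where
  toFun := sumToIterFun
  map_one' := by
    ext d e
    simp only [coeff_coeff_sumToIterFun, coeff_one,
      map_eq_zero_iff _ Finsupp.sumFinsuppAddEquivProdFinsupp.symm.injective, Prod.mk_eq_zero]
    split_ifs <;> simp_all [coeff_one]
  map_mul' s t := by
    ext d e
    rw [coeff_coeff_sumToIterFun, coeff_mul, coeff_mul, map_sum]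
    simp only [coeff_mul, coeff_coeff_sumToIterFun, ← sum_product']
    set φ := (Finsupp.sumFinsuppAddEquivProdFinsupp : (σ ⊕ τ →₀ ℕ) ≃+ _)
    symm
    refine sum_nbij' (fun x ↦ (φ.symm (x.1.1, x.2.1), φ.symm (x.1.2, x.2.2)))
      (fun p ↦ (((φ p.1).1, (φ p.2).1), ((φ p.1).2, (φ p.2).2))) ?_ ?_ ?_ ?_ ?_
    · simp only [mem_product, HasAntidiagonal.mem_antidiagonal]
      rintro x ⟨hd, he⟩
      rw [← map_add, Prod.mk_add_mk, hd, he]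
    · simp only [mem_product, HasAntidiagonal.mem_antidiagonal]
      intro p hp
      rw [← Prod.fst_add, ← Prod.snd_add, ← map_add, hp, AddEquiv.apply_symm_apply]
      simp
    · simp
    · simp
    · simp
  map_zero' := rfl
  map_add' _ _ := rfl

theorem coeff_coeff_sumToIter (s : MvPowerSeries (σ ⊕ τ) R) (d : σ →₀ ℕ) (e : τ →₀ ℕ) :
    coeff e (coeff d (sumToIter s)) =
      coeff (Finsupp.sumFinsuppAddEquivProdFinsupp.symm (d, e)) s :=
  rfl

theorem sumToIter_rename_inl (u : MvPowerSeries σ R) :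
    sumToIter (rename Sum.inl u : MvPowerSeries (σ ⊕ τ) R) = map C u := by
  ext d e
  rw [coeff_coeff_sumToIter, coeff_map, coeff_C]
  split_ifs with he
  · subst he
    have : Finsupp.sumFinsuppAddEquivProdFinsupp.symm (d, 0) =
        Finsupp.embDomain (Function.Embedding.inl : σ ↪ σ ⊕ τ) d := by
      ext (j | j) <;> simp
    rw [this]
    exact coeff_embDomain_rename _ u d
  · refine coeff_rename_eq_zero _ _ fun ⟨x, hx⟩ ↦ he (Finsupp.ext fun j ↦ ?_)
    simpa [Finsupp.mapDomain_of_notMem_range] using (DFunLike.congr_fun hx (Sum.inr j)).symm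

theorem sumToIter_rename_inr (v : MvPowerSeries τ R) :
    sumToIter (rename Sum.inr v : MvPowerSeries (σ ⊕ τ) R) = C v := by
  ext d e
  rw [coeff_coeff_sumToIter, coeff_C]
  split_ifs with hd
  · subst hd
    have : Finsupp.sumFinsuppAddEquivProdFinsupp.symm (0, e) =
        Finsupp.embDomain (Function.Embedding.inr : τ ↪ σ ⊕ τ) e := by
      ext (j | j) <;> simp
    rw [this]
    exact coeff_embDomain_rename _ v e
  · rw [map_zero]
    refine coeff_rename_eq_zero _ _ fun ⟨x, hx⟩ ↦ hd (Finsupp.ext fun j ↦ ?_)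
    simpa [Finsupp.mapDomain_of_notMem_range] using (DFunLike.congr_fun hx (Sum.inl j)).symm

section mapLinear

variable {S S' : Type*} [Semiring S] [Module R S] [Semiring S'] [Module R S']

noncomputable def mapLinear (f : S →ₗ[R] S') : MvPowerSeries σ S →ₗ[R] MvPowerSeries σ S' where
  toFun F := fun d ↦ f (coeff d F)
  map_add' F G := by ext d; exact f.map_add _ _
  map_smul' r F := by ext d; exact f.map_smul _ _

theorem coeff_mapLinear (f : S →ₗ[R] S') (F : MvPowerSeries σ S) (d : σ →₀ ℕ) :
    coeff d (mapLinear f F) = f (coeff d F) :=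
  rfl

@[simp]
theorem mapLinear_zero : mapLinear (0 : S →ₗ[R] S') = (0 : MvPowerSeries σ S →ₗ[R] _) :=
  rfl

theorem mapLinear_one (f : S →ₗ[R] S') : mapLinear f (1 : MvPowerSeries σ S) = C (f 1) := by
  ext d
  rw [coeff_mapLinear, coeff_one, coeff_C]
  split_ifs <;> simp

end mapLinear

section mapLinear_mul

variable {S : Type*} [CommSemiring S] [Algebra R S]

theorem mapLinear_mul_map_algebraMap (f : S →ₗ[R] R) (F : MvPowerSeries σ S)
    (u : MvPowerSeries σ R) :
    mapLinear f (F * map (algebraMap R S) u) = mapLinear f F * u := by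
  ext d
  rw [coeff_mapLinear, coeff_mul, coeff_mul, map_sum]
  refine sum_congr rfl fun p _ ↦ ?_
  rw [coeff_map, coeff_mapLinear, ← Algebra.commutes, ← Algebra.smul_def, map_smul, smul_eq_mul,
    mul_comm]

theorem mapLinear_mul_C (f : S →ₗ[R] R) (F : MvPowerSeries σ S) (v : S) :
    mapLinear f (F * C v) = mapLinear (f ∘ₗ LinearMap.mulRight R v) F := by
  ext d
  rw [coeff_mapLinear, coeff_mul_C, coeff_mapLinear, LinearMap.comp_apply,
    LinearMap.mulRight_apply]

end mapLinear_mul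

end CommSemiring

end MvPowerSeries

theorem AddMonoidHom.map_eq_zero_of_mem_span {R M : Type*} [CommSemiring R] [AddCommMonoid M]
    (T : R →+ M) {S : Set R} (hS : ∀ z ∈ S, ∀ s, T (s * z) = 0) {z : R}
    (hz : z ∈ Ideal.span S) : T z = 0 := by
  suffices ∀ s, T (s * z) = 0 by simpa using this 1
  induction hz using Submodule.span_induction with
  | mem x hx => exact hS x hx
  | zero => simp
  | add x y _ _ hx hy => intro s; rw [mul_add, map_add, hx, hy, add_zero]
  | smul a x _ hx => intro s; rw [smul_eq_mul, ← mul_assoc]; exact hx _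

theorem isUnit_sum_antidiagonal_pow_mul {A : Type*} [CommRing A] {a : A} (ha : IsNilpotent a)
    {r : ℕ → A} {k : ℕ} (hr : IsUnit (r k)) : IsUnit (∑ p ∈ antidiagonal k, a ^ p.1 * r p.2) := by
  cases k with
  | zero => simpa using hr
  | succ k =>
    rw [Nat.sum_antidiagonal_succ]
    simp only [pow_zero, one_mul, pow_succ', mul_assoc, ← mul_sum]
    exact (Commute.all _ _).isNilpotent_mul_right ha |>.isUnit_add_left_of_commute hr
      (Commute.all _ _)

namespace MvPowerSeries

section Retraction

variable {K σ τ : Type*} [CommRing K] {J : Ideal (MvPowerSeries τ K)} (g₀ : MvPowerSeries τ K)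
  (μ : (MvPowerSeries τ K ⧸ J) →ₗ[K] K)

noncomputable def mulPowFunctional (j : ℕ) : MvPowerSeries τ K →ₗ[K] K :=
  μ ∘ₗ LinearMap.mulRight K (Ideal.Quotient.mk J g₀ ^ j) ∘ₗ (Ideal.Quotient.mkₐ K J).toLinearMap

theorem mulPowFunctional_apply (j : ℕ) (w : MvPowerSeries τ K) :
    mulPowFunctional g₀ μ j w = μ (Ideal.Quotient.mk J w * Ideal.Quotient.mk J g₀ ^ j) :=
  rfl

theorem mulPowFunctional_comp_mulRight_self (j : ℕ) :
    mulPowFunctional g₀ μ j ∘ₗ LinearMap.mulRight K g₀ = mulPowFunctional g₀ μ (j + 1) := by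
  ext w
  simp only [LinearMap.comp_apply, LinearMap.mulRight_apply, mulPowFunctional_apply, map_mul,
    mul_assoc, pow_succ']

theorem mulPowFunctional_comp_mulRight_of_mem (j : ℕ) {v : MvPowerSeries τ K} (hv : v ∈ J) :
    mulPowFunctional g₀ μ j ∘ₗ LinearMap.mulRight K v = 0 := by
  ext w
  simp [mulPowFunctional_apply, Ideal.Quotient.eq_zero_iff_mem.mpr hv]

theorem mulPowFunctional_eq_zero {k : ℕ} (hb : Ideal.Quotient.mk J g₀ ^ k = 0) :
    mulPowFunctional g₀ μ k = 0 := by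
  ext w
  simp [mulPowFunctional_apply, hb]

variable (I : Ideal (MvPowerSeries σ K)) (f₀ : MvPowerSeries σ K)

noncomputable def pushoutRetraction (k : ℕ) :
    MvPowerSeries (σ ⊕ τ) K →+ MvPowerSeries σ K ⧸ I where
  toFun s := ∑ p ∈ antidiagonal k, Ideal.Quotient.mk I f₀ ^ p.1 *
    Ideal.Quotient.mk I (mapLinear (mulPowFunctional g₀ μ p.2) (sumToIter s))
  map_zero' := by simp
  map_add' s t := by simp [mul_add, sum_add_distrib]

theorem pushoutRetraction_apply (k : ℕ) (s : MvPowerSeries (σ ⊕ τ) K) :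
    pushoutRetraction g₀ μ I f₀ k s = ∑ p ∈ antidiagonal k, Ideal.Quotient.mk I f₀ ^ p.1 *
      Ideal.Quotient.mk I (mapLinear (mulPowFunctional g₀ μ p.2) (sumToIter s)) :=
  rfl

variable {g₀ μ I f₀}

theorem pushoutRetraction_mul_rename_inl (k : ℕ) (s : MvPowerSeries (σ ⊕ τ) K)
    (u : MvPowerSeries σ K) :
    pushoutRetraction g₀ μ I f₀ k (s * rename Sum.inl u) =
      pushoutRetraction g₀ μ I f₀ k s * Ideal.Quotient.mk I u := by
  simp only [pushoutRetraction_apply, map_mul, sumToIter_rename_inl, c_eq_algebraMap,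
    mapLinear_mul_map_algebraMap, sum_mul, mul_assoc]

theorem pushoutRetraction_mul_rename_inr_of_mem (k : ℕ) (s : MvPowerSeries (σ ⊕ τ) K)
    {v : MvPowerSeries τ K} (hv : v ∈ J) :
    pushoutRetraction g₀ μ I f₀ k (s * rename Sum.inr v) = 0 := by
  simp [pushoutRetraction_apply, sumToIter_rename_inr, mapLinear_mul_C,
    mulPowFunctional_comp_mulRight_of_mem _ _ _ hv]

theorem pushoutRetraction_mul_sub (k : ℕ) (ha : Ideal.Quotient.mk I f₀ ^ (k + 1) = 0)
    (hb : Ideal.Quotient.mk J g₀ ^ (k + 1) = 0) (s : MvPowerSeries (σ ⊕ τ) K) :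
    pushoutRetraction g₀ μ I f₀ k (s * (rename Sum.inl f₀ - rename Sum.inr g₀)) = 0 := by
  set a := Ideal.Quotient.mk I f₀
  set Λ : ℕ → MvPowerSeries σ K ⧸ I := fun j ↦
    Ideal.Quotient.mk I (mapLinear (mulPowFunctional g₀ μ j) (sumToIter s))
  have hx : pushoutRetraction g₀ μ I f₀ k (s * rename Sum.inl f₀) =
      ∑ p ∈ antidiagonal k, a ^ (p.1 + 1) * Λ p.2 := by
    rw [pushoutRetraction_mul_rename_inl, pushoutRetraction_apply, sum_mul]
    exact sum_congr rfl fun p _ ↦ by ring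
  have hy : pushoutRetraction g₀ μ I f₀ k (s * rename Sum.inr g₀) =
      ∑ p ∈ antidiagonal k, a ^ p.1 * Λ (p.2 + 1) := by
    simp only [pushoutRetraction_apply, map_mul, sumToIter_rename_inr, mapLinear_mul_C,
      mulPowFunctional_comp_mulRight_self, Λ, a]
  -- both sums are the sum over the antidiagonal of `k + 1`, minus a term that vanishes
  have hΛ : Λ (k + 1) = 0 := by simp [Λ, mulPowFunctional_eq_zero g₀ μ hb]
  have hsum₁ := Nat.sum_antidiagonal_succ (f := fun p ↦ a ^ p.1 * Λ p.2) (n := k)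
  have hsum₂ := Nat.sum_antidiagonal_succ' (f := fun p ↦ a ^ p.1 * Λ p.2) (n := k)
  simp only [hΛ, ha, mul_zero, zero_mul, zero_add] at hsum₁ hsum₂
  rw [mul_sub, map_sub, hx, hy, ← hsum₁, ← hsum₂, sub_self]

theorem isUnit_pushoutRetraction_one (k : ℕ) (ha : IsNilpotent (Ideal.Quotient.mk I f₀))
    (hμ : μ (Ideal.Quotient.mk J g₀ ^ k) = 1) :
    IsUnit (pushoutRetraction g₀ μ I f₀ k 1) := by
  refine isUnit_sum_antidiagonal_pow_mul (r := fun j ↦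
    Ideal.Quotient.mk I (mapLinear (mulPowFunctional g₀ μ j) (sumToIter 1))) ha ?_
  simp [mapLinear_one, mulPowFunctional_apply, hμ]

end Retraction

end MvPowerSeries

open MvPowerSeries

theorem inclX_eq_rename {n m : ℕ} :
    (inclX : MvPowerSeries (Fin n) ℝ → MvPowerSeries (Fin n ⊕ Fin m) ℝ) = rename Sum.inl := by
  ext f d
  exact (coeff_rename_embedding Function.Embedding.inl f d).symm

theorem inclY_eq_rename {n m : ℕ} :
    (inclY : MvPowerSeries (Fin m) ℝ → MvPowerSeries (Fin n ⊕ Fin m) ℝ) = rename Sum.inr := by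
  ext f d
  exact (coeff_rename_embedding Function.Embedding.inr f d).symm

theorem stmt_18_general {n m k : ℕ}
    (I : Ideal (MvPowerSeries (Fin n) ℝ)) (J : Ideal (MvPowerSeries (Fin m) ℝ))
    (f₀ : MvPowerSeries (Fin n) ℝ) (g₀ : MvPowerSeries (Fin m) ℝ)
    (ha : Ideal.Quotient.mk I f₀ ^ k = 0)
    (hb : Ideal.Quotient.mk J g₀ ^ k = 0) (hb' : Ideal.Quotient.mk J g₀ ^ (k - 1) ≠ 0) :
    ∀ φ : (MvPowerSeries (Fin n) ℝ ⧸ I) →+*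
        (MvPowerSeries (Fin n ⊕ Fin m) ℝ ⧸ pushoutIdeal I J f₀ g₀),
      (∀ f : MvPowerSeries (Fin n) ℝ,
        φ (Ideal.Quotient.mk I f) = Ideal.Quotient.mk (pushoutIdeal I J f₀ g₀) (inclX f)) →
      Function.Injective φ := by
  intro φ hφ
  obtain ⟨k, rfl⟩ : ∃ l, k = l + 1 := Nat.exists_eq_add_one.mpr <|
    Nat.pos_of_ne_zero fun hk ↦ hb' (by simpa [hk] using hb)
  rw [Nat.add_sub_cancel] at hb'
  obtain ⟨μ, hμ⟩ := Module.Projective.exists_dual_eq_one ℝ hb'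
  set T := pushoutRetraction g₀ μ I f₀ k
  have hT : ∀ z ∈ pushoutIdeal I J f₀ g₀, T z = 0 := by
    refine fun z hz ↦ T.map_eq_zero_of_mem_span ?_ hz
    rw [inclX_eq_rename, inclY_eq_rename]
    rintro _ (⟨u, hu, rfl⟩ | ⟨v, hv, rfl⟩ | rfl) s
    · rw [pushoutRetraction_mul_rename_inl, Ideal.Quotient.eq_zero_iff_mem.mpr hu, mul_zero]
    · exact pushoutRetraction_mul_rename_inr_of_mem k s hv
    · exact pushoutRetraction_mul_sub k ha hb s
  refine (injective_iff_map_eq_zero φ).mpr fun x hx ↦ ?_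
  obtain ⟨f, rfl⟩ := Ideal.Quotient.mk_surjective x
  rw [hφ, Ideal.Quotient.eq_zero_iff_mem] at hx
  have := hT _ hx
  rwa [inclX_eq_rename, ← one_mul (rename _ f), pushoutRetraction_mul_rename_inl,
    (isUnit_pushoutRetraction_one k ⟨k + 1, ha⟩ hμ).mul_right_eq_zero] at this

/-- Let `A = ℝ[[x₁,…,xₙ]]/I`, `B = ℝ[[y₁,…,yₘ]]/J`, and suppose the classes `a₀` of `f₀`
and `b₀` of `g₀` satisfy `a₀^k = 0 ≠ a₀^{k−1}` and `b₀^k = 0 ≠ b₀^{k−1}`. Let `K` be the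
ideal generated by `I ∪ J ∪ {f₀ − g₀}` in the big power series ring. Then the canonical
ring homomorphism `A → ℝ[[x₁,…,xₙ,y₁,…,yₘ]]/K` (induced by the inclusion of power series
rings) is injective. -/
theorem stmt_18 {n m k : ℕ} (hk : 1 ≤ k)
    (I : Ideal (MvPowerSeries (Fin n) ℝ)) (J : Ideal (MvPowerSeries (Fin m) ℝ))
    (f₀ : MvPowerSeries (Fin n) ℝ) (g₀ : MvPowerSeries (Fin m) ℝ)
    (ha : Ideal.Quotient.mk I f₀ ^ k = 0) (ha' : Ideal.Quotient.mk I f₀ ^ (k - 1) ≠ 0)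
    (hb : Ideal.Quotient.mk J g₀ ^ k = 0) (hb' : Ideal.Quotient.mk J g₀ ^ (k - 1) ≠ 0) :
    ∀ φ : (MvPowerSeries (Fin n) ℝ ⧸ I) →+*
        (MvPowerSeries (Fin n ⊕ Fin m) ℝ ⧸ pushoutIdeal I J f₀ g₀),
      (∀ f : MvPowerSeries (Fin n) ℝ,
        φ (Ideal.Quotient.mk I f) = Ideal.Quotient.mk (pushoutIdeal I J f₀ g₀) (inclX f)) →
      Function.Injective φ :=
  stmt_18_general I J f₀ g₀ ha hb hb'
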